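/- Let X be a formal vector field in Poincaré–Dulac normal form with semisimple linear part S_λ. Then for every β ∈ R, if S_λ(X(β)) = 0 then S_λ(β) = 0. -/

import Mathlib

open Finset

noncomputable def psPderiv {n : ℕ} (j : Fin n) (F : MvPowerSeries (Fin n) ℂ) :
    MvPowerSeries (Fin n) ℂ :=
  fun a => ((a j + 1 : ℕ) : ℂ) * MvPowerSeries.coeff (a + Finsupp.single j 1) F

noncomputable def vfApply {n : ℕ} (V : Fin n → MvPowerSeries (Fin n) ℂ)
    (F : MvPowerSeries (Fin n) ℂ) : MvPowerSeries (Fin n) ℂ :=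
  ∑ j, V j * psPderiv j F

noncomputable def vfLie {n : ℕ} (U V : Fin n → MvPowerSeries (Fin n) ℂ) :
    Fin n → MvPowerSeries (Fin n) ℂ :=
  fun j => vfApply U (V j) - vfApply V (U j)

noncomputable def diagVF {n : ℕ} (lam : Fin n → ℂ) : Fin n → MvPowerSeries (Fin n) ℂ :=
  fun j => MvPowerSeries.C (σ := Fin n) (R := ℂ) (lam j) * MvPowerSeries.X j

def IsPDNormalForm {n : ℕ} (lam : Fin n → ℂ) (Xf : Fin n → MvPowerSeries (Fin n) ℂ) : Prop :=
  (∀ j, MvPowerSeries.coeff (R := ℂ) 0 (Xf j) = 0) ∧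
  (∃ A : Matrix (Fin n) (Fin n) ℂ, IsNilpotent A ∧
      A * Matrix.diagonal lam = Matrix.diagonal lam * A ∧
      ∀ j l, MvPowerSeries.coeff (R := ℂ) (Finsupp.single l 1) (Xf j)
        = (if l = j then lam j else 0) + A j l) ∧
  (∀ j, vfLie (diagVF lam) Xf j = 0)

/-!
Since `[S_λ, X] = 0`, every monomial of `X` is resonant, so `X` commutes with `S_λ` and
`γ := S_λ β` satisfies `X γ = S_λ (X β) = 0`; moreover `γ` has no monomial of weight zero.
If `γ ≠ 0`, its lowest-degree homogeneous part `γ_d` is killed by the linear part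
`S_λ + N_A` of `X`. The derivation `N_A` commutes with `S_λ` and is locally nilpotent on
polynomials, being nilpotent on the variables, so `S_λ^m γ_d = (-N_A)^m γ_d = 0` for large `m`.
As `S_λ` multiplies the coefficient of `x^a` by the weight `⟨a, λ⟩`, this forces `γ_d = 0`.
-/

open MvPowerSeries

namespace Derivation

variable {R A : Type*} [CommSemiring R] [CommSemiring A] [Algebra R A]

theorem iterate_mul_eq_zero (D : Derivation R A A) {p q : ℕ} {a b : A}
    (ha : D^[p] a = 0) (hb : D^[q] b = 0) : D^[p + q] (a * b) = 0 := by
  induction hk : p + q generalizing p q a b with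
  | zero =>
    obtain ⟨rfl, rfl⟩ : p = 0 ∧ q = 0 := by omega
    simp_all
  | succ k ih =>
    rcases p with _ | p
    · simp_all
    rcases q with _ | q
    · simp_all
    rw [Function.iterate_succ_apply, leibniz, smul_eq_mul, smul_eq_mul, iterate_map_add,
      ih (p := p + 1) (q := q) ha hb (by omega),
      mul_comm b, ih (p := p) (q := q + 1) ha hb (by omega), add_zero]

def locallyNilpotentSubalgebra (D : Derivation R A A) : Subalgebra R A where
  carrier := {a | ∃ m, D^[m] a = 0}
  mul_mem' := fun ⟨_, hp⟩ ⟨_, hq⟩ => ⟨_, D.iterate_mul_eq_zero hp hq⟩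
  add_mem' := fun {a b} ⟨p, hp⟩ ⟨q, hq⟩ => ⟨p + q, by
    rw [iterate_map_add, add_comm p, Function.iterate_add_apply, hp, iterate_map_zero, zero_add,
      add_comm q, Function.iterate_add_apply, hq, iterate_map_zero]⟩
  algebraMap_mem' r := ⟨1, D.map_algebraMap r⟩

end Derivation

namespace MvPowerSeries

variable {σ R : Type*} [CommSemiring R]

theorem coeff_X_mul_pderiv (j : σ) (F : MvPowerSeries σ R) (a : σ →₀ ℕ) :
    coeff a (X j * pderiv R j F) = a j * coeff a F := by
  classical
  rw [X, coeff_monomial_mul, one_mul]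
  split_ifs with h
  · rw [coeff_pderiv, tsub_add_cancel_of_le h, mul_comm]
    congr
    have : 1 ≤ a j := by simpa using h j
    simp only [Finsupp.coe_tsub, Pi.sub_apply, Finsupp.single_eq_same]
    rw [← Nat.cast_add_one, Nat.sub_add_cancel this]
  · have : a j = 0 := by
      by_contra h'
      exact h (Finsupp.single_le_iff.2 (Nat.one_le_iff_ne_zero.2 h'))
    simp [this]

theorem homogeneousComponent_pderiv (k : ℕ) (j : σ) (f : MvPowerSeries σ R) :
    homogeneousComponent k (pderiv R j f) = pderiv R j (homogeneousComponent (k + 1) f) := by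
  ext a
  simp only [coeff_homogeneousComponent, coeff_pderiv, map_add, Finsupp.degree_single,
    Nat.add_right_cancel_iff]
  split_ifs <;> simp

theorem le_order_pderiv {k : ℕ} (j : σ) {f : MvPowerSeries σ R} (hf : (k + 1 : ℕ∞) ≤ f.order) :
    (k : ℕ∞) ≤ (pderiv R j f).order :=
  le_order fun a ha => by
    have : ((a + Finsupp.single j 1).degree : ℕ∞) < k + 1 := by
      rw [map_add, Finsupp.degree_single, Nat.cast_add, Nat.cast_one]
      exact (ENat.add_lt_add_iff_right ENat.one_ne_top).2 ha
    rw [coeff_pderiv, coeff_of_lt_order (this.trans_le hf), zero_mul]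

end MvPowerSeries

section VectorFields

variable {n : ℕ}

theorem psPderiv_eq_pderiv (j : Fin n) (F : MvPowerSeries (Fin n) ℂ) :
    psPderiv j F = pderiv ℂ j F := by
  ext a
  rw [coeff_pderiv, mul_comm]
  change ((a j + 1 : ℕ) : ℂ) * _ = _
  push_cast
  rfl

noncomputable def vfDerivation (V : Fin n → MvPowerSeries (Fin n) ℂ) :
    Derivation ℂ (MvPowerSeries (Fin n) ℂ) (MvPowerSeries (Fin n) ℂ) :=
  ∑ j, V j • pderiv ℂ j

theorem vfDerivation_apply (V : Fin n → MvPowerSeries (Fin n) ℂ) (F : MvPowerSeries (Fin n) ℂ) :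
    vfDerivation V F = vfApply V F := by
  rw [vfDerivation, ← Derivation.coeFnAddMonoidHom_apply, map_sum, Finset.sum_apply]
  simp [vfApply, psPderiv_eq_pderiv, Derivation.smul_apply]

theorem vfApply_add_left (U V : Fin n → MvPowerSeries (Fin n) ℂ) (F : MvPowerSeries (Fin n) ℂ) :
    vfApply (U + V) F = vfApply U F + vfApply V F := by
  simp only [vfApply, Pi.add_apply, add_mul, Finset.sum_add_distrib]

theorem vfApply_X (V : Fin n → MvPowerSeries (Fin n) ℂ) (k : Fin n) : vfApply V (X k) = V k := by
  classical
  simp [vfApply, psPderiv_eq_pderiv, pderiv_X, Pi.single_apply]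

theorem coeff_vfApply (V : Fin n → MvPowerSeries (Fin n) ℂ) (F : MvPowerSeries (Fin n) ℂ)
    (a : Fin n →₀ ℕ) :
    coeff a (vfApply V F)
      = ∑ j, ∑ p ∈ antidiagonal a, coeff p.1 (V j) * coeff p.2 (pderiv ℂ j F) := by
  simp only [vfApply, psPderiv_eq_pderiv, map_sum, coeff_mul]

theorem coeff_vfApply_diagVF (lam : Fin n → ℂ) (F : MvPowerSeries (Fin n) ℂ) (a : Fin n →₀ ℕ) :
    coeff a (vfApply (diagVF lam) F) = Finsupp.weight lam a * coeff a F := by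
  simp only [vfApply, diagVF, psPderiv_eq_pderiv, mul_assoc, map_sum, coeff_C_mul,
    coeff_X_mul_pderiv, Finsupp.weight_apply, nsmul_eq_mul]
  rw [Finsupp.sum_fintype _ _ (by simp), Finset.sum_mul]
  exact Finset.sum_congr rfl fun _ _ => by ring

def IsResonant (lam : Fin n → ℂ) (V : Fin n → MvPowerSeries (Fin n) ℂ) : Prop :=
  ∀ j a, coeff a (V j) ≠ 0 → Finsupp.weight lam a = lam j

theorem vfApply_diagVF (V : Fin n → MvPowerSeries (Fin n) ℂ) (lam : Fin n → ℂ) (j : Fin n) :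
    vfApply V (diagVF lam j) = lam j • V j := by
  rw [← vfDerivation_apply, diagVF, ← smul_eq_C_mul, Derivation.map_smul, vfDerivation_apply,
    vfApply_X]

theorem isResonant_of_vfLie_eq_zero {lam : Fin n → ℂ} {V : Fin n → MvPowerSeries (Fin n) ℂ}
    (h : ∀ j, vfLie (diagVF lam) V j = 0) : IsResonant lam V := by
  intro j a ha
  have h := congrArg (coeff a) (h j)
  rw [vfLie, map_sub, coeff_vfApply_diagVF, vfApply_diagVF, coeff_smul, map_zero, ← sub_mul] at h
  exact sub_eq_zero.1 ((mul_eq_zero.1 h).resolve_right ha)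

theorem coeff_pderiv_vfApply_diagVF (lam : Fin n → ℂ) (j : Fin n) (F : MvPowerSeries (Fin n) ℂ)
    (b : Fin n →₀ ℕ) :
    coeff b (pderiv ℂ j (vfApply (diagVF lam) F))
      = Finsupp.weight lam (b + Finsupp.single j 1) * coeff b (pderiv ℂ j F) := by
  rw [coeff_pderiv, coeff_pderiv, coeff_vfApply_diagVF, mul_assoc]

theorem IsResonant.vfApply_diagVF_comm {lam : Fin n → ℂ} {V : Fin n → MvPowerSeries (Fin n) ℂ}
    (hV : IsResonant lam V) (F : MvPowerSeries (Fin n) ℂ) :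
    vfApply (diagVF lam) (vfApply V F) = vfApply V (vfApply (diagVF lam) F) := by
  ext a
  rw [coeff_vfApply_diagVF, coeff_vfApply, coeff_vfApply]
  simp only [coeff_pderiv_vfApply_diagVF, Finset.mul_sum]
  refine Finset.sum_congr rfl fun j _ => Finset.sum_congr rfl fun p hp => ?_
  by_cases h : coeff p.1 (V j) = 0
  · simp [h]
  · rw [← mem_antidiagonal.1 hp, map_add, map_add, hV j _ h, Finsupp.weight_single,
      one_smul]
    ring

-- The paper's `N_A` is `linearVF A`.
noncomputable def linearVF (M : Matrix (Fin n) (Fin n) ℂ) : Fin n → MvPowerSeries (Fin n) ℂ :=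
  fun j => ∑ l, M j l • X l

theorem isResonant_linearVF {lam : Fin n → ℂ} {A : Matrix (Fin n) (Fin n) ℂ}
    (hA : A * Matrix.diagonal lam = Matrix.diagonal lam * A) : IsResonant lam (linearVF A) := by
  classical
  intro j a ha
  obtain ⟨l, -, hl⟩ := Finset.exists_ne_zero_of_sum_ne_zero (by simpa [linearVF] using ha)
  have hal : a = Finsupp.single l 1 := by
    by_contra h
    simp [coeff_X, h] at hl
  have hAjl : A j l ≠ 0 := by
    rintro h
    simp [h] at hl
  have h := congrFun (congrFun hA j) l
  rw [Matrix.mul_diagonal, Matrix.diagonal_mul, mul_comm] at h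
  rw [hal, Finsupp.weight_single, one_smul]
  exact mul_right_cancel₀ hAjl h

theorem homogeneousComponent_one_eq_diagVF_add_linearVF {lam : Fin n → ℂ}
    {A : Matrix (Fin n) (Fin n) ℂ} {Xf : Fin n → MvPowerSeries (Fin n) ℂ}
    (hlin : ∀ j l, coeff (Finsupp.single l 1) (Xf j) = (if l = j then lam j else 0) + A j l)
    (j : Fin n) : homogeneousComponent 1 (Xf j) = diagVF lam j + linearVF A j := by
  classical
  ext a
  rw [coeff_homogeneousComponent]
  simp only [diagVF, linearVF, map_add, coeff_C_mul, map_sum, coeff_smul, coeff_X]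
  by_cases ha : Finsupp.degree a = 1
  · obtain ⟨l, rfl⟩ : a ∈ Set.range (Finsupp.single · 1) := Finsupp.range_single_one ▸ ha
    rw [if_pos ha, hlin]
    simp [Finsupp.single_left_inj one_ne_zero]
  · have : ∀ l, a ≠ Finsupp.single l 1 := fun l h => ha (h ▸ Finsupp.degree_single l 1)
    simp [ha, this]

theorem homogeneousComponent_vfApply {V : Fin n → MvPowerSeries (Fin n) ℂ}
    (hV : ∀ j, coeff 0 (V j) = 0) {γ : MvPowerSeries (Fin n) ℂ} {k : ℕ}
    (hγ : (k + 1 : ℕ∞) ≤ γ.order) :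
    homogeneousComponent (k + 1) (vfApply V γ)
      = vfApply (fun j => homogeneousComponent 1 (V j)) (homogeneousComponent (k + 1) γ) := by
  simp only [vfApply, psPderiv_eq_pderiv, map_sum]
  refine Finset.sum_congr rfl fun j _ => ?_
  have hVj : 1 ≤ (V j).order := one_le_order_iff_constCoeff_eq_zero.2 (hV j)
  rw [add_comm k 1, homogeneousComponent_mul_of_le_order hVj (le_order_pderiv j hγ),
    homogeneousComponent_pderiv, add_comm]

theorem iterate_vfDerivation_linearVF_X (A : Matrix (Fin n) (Fin n) ℂ) (m : ℕ) (k : Fin n) :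
    (vfDerivation (linearVF A))^[m] (X k) = linearVF (A ^ m) k := by
  classical
  induction m with
  | zero => simp [linearVF, Matrix.one_apply]
  | succ m ih =>
    rw [Function.iterate_succ_apply', ih, linearVF, map_sum]
    simp only [Derivation.map_smul, vfDerivation_apply, vfApply_X, linearVF, Finset.smul_sum,
      smul_smul]
    rw [Finset.sum_comm]
    simp [pow_succ, Matrix.mul_apply, Finset.sum_smul]

theorem mem_locallyNilpotentSubalgebra_of_isHomogeneous {A : Matrix (Fin n) (Fin n) ℂ}
    (hA : IsNilpotent A) {f : MvPowerSeries (Fin n) ℂ} {d : ℕ} (hf : f.IsHomogeneous d) :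
    f ∈ (vfDerivation (linearVF A)).locallyNilpotentSubalgebra := by
  obtain ⟨K, hK⟩ := hA
  have hX (k : Fin n) : X k ∈ (vfDerivation (linearVF A)).locallyNilpotentSubalgebra :=
    ⟨K, by simp [iterate_vfDerivation_linearVF_X, hK, linearVF]⟩
  have hpoly (p : MvPolynomial (Fin n) ℂ) :
      (p : MvPowerSeries (Fin n) ℂ) ∈ (vfDerivation (linearVF A)).locallyNilpotentSubalgebra := by
    induction p using MvPolynomial.induction_on with
    | C a => exact MvPolynomial.coe_C a ▸ Subalgebra.algebraMap_mem _ a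
    | add p q hp hq => exact MvPolynomial.coe_add p q ▸ add_mem hp hq
    | mul_X p k hp =>
      rw [MvPolynomial.coe_mul, MvPolynomial.coe_X]
      exact mul_mem hp (hX k)
  have hf_poly : f = (truncTotal (d + 1) f : MvPowerSeries (Fin n) ℂ) := by
    ext a
    rw [MvPolynomial.coeff_coe, coeff_truncTotal_eq_ite]
    split_ifs with ha
    · rfl
    · exact hf.coeff_eq_zero (by omega)
  exact hf_poly ▸ hpoly _

theorem coeff_iterate_vfDerivation_diagVF (lam : Fin n → ℂ) (m : ℕ) (F : MvPowerSeries (Fin n) ℂ)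
    (a : Fin n →₀ ℕ) :
    coeff a ((vfDerivation (diagVF lam))^[m] F) = Finsupp.weight lam a ^ m * coeff a F := by
  induction m with
  | zero => simp
  | succ m ih =>
    rw [Function.iterate_succ_apply', vfDerivation_apply, coeff_vfApply_diagVF, ih]
    ring

theorem eq_zero_of_isHomogeneous_of_vfApply_eq_zero {lam : Fin n → ℂ}
    {A : Matrix (Fin n) (Fin n) ℂ} (hA : IsNilpotent A)
    (hcomm : A * Matrix.diagonal lam = Matrix.diagonal lam * A) {γ : MvPowerSeries (Fin n) ℂ}
    {d : ℕ} (hγ : γ.IsHomogeneous d) (hγ0 : ∀ a, Finsupp.weight lam a = 0 → coeff a γ = 0)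
    (h : vfApply (diagVF lam + linearVF A) γ = 0) : γ = 0 := by
  set S := vfDerivation (diagVF lam)
  set N := vfDerivation (linearVF A)
  have hSN : Function.Commute S N := fun F => by
    simp only [S, N, vfDerivation_apply]
    exact (isResonant_linearVF hcomm).vfApply_diagVF_comm F
  have hSγ : S γ = -N γ := by
    refine eq_neg_of_add_eq_zero_left ?_
    rw [vfDerivation_apply, vfDerivation_apply, ← vfApply_add_left, h]
  have hiter (k : ℕ) : S^[k] γ = (-1 : ℂ) ^ k • N^[k] γ := by
    induction k with
    | zero => simp
    | succ k ih =>
      rw [Function.iterate_succ_apply', ih, Derivation.map_smul, hSN.iterate_right k γ, hSγ,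
        iterate_map_neg, ← Function.iterate_succ_apply, pow_succ, mul_neg_one, neg_smul,
        smul_neg]
  obtain ⟨m, hm⟩ := mem_locallyNilpotentSubalgebra_of_isHomogeneous hA hγ
  ext a
  have ha := congrArg (coeff a) (hiter m)
  rw [hm, smul_zero, map_zero, coeff_iterate_vfDerivation_diagVF] at ha
  by_cases hw : Finsupp.weight lam a = 0
  · exact hγ0 a hw
  · exact (mul_eq_zero.1 ha).resolve_left (pow_ne_zero m hw)

theorem eq_zero_of_vfApply_eq_zero {lam : Fin n → ℂ} {Xf : Fin n → MvPowerSeries (Fin n) ℂ}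
    {A : Matrix (Fin n) (Fin n) ℂ} (hconst : ∀ j, coeff 0 (Xf j) = 0)
    (hlin : ∀ j l, coeff (Finsupp.single l 1) (Xf j) = (if l = j then lam j else 0) + A j l)
    (hA : IsNilpotent A) (hcomm : A * Matrix.diagonal lam = Matrix.diagonal lam * A)
    {γ : MvPowerSeries (Fin n) ℂ} (hγ0 : ∀ a, Finsupp.weight lam a = 0 → coeff a γ = 0)
    (h : vfApply Xf γ = 0) : γ = 0 := by
  by_contra hne
  have hd : (γ.order.toNat : ℕ∞) = γ.order := ne_zero_iff_order_finite.1 hne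
  obtain ⟨k, hk⟩ : ∃ k, γ.order.toNat = k + 1 := by
    refine Nat.exists_eq_succ_of_ne_zero fun h0 => ?_
    refine order_ne_zero_iff_constCoeff_eq_zero.2 ?_ (by rw [← hd, h0, Nat.cast_zero])
    exact hγ0 0 (map_zero _)
  apply homogeneousComponent_of_order hd
  refine eq_zero_of_isHomogeneous_of_vfApply_eq_zero hA hcomm
    (isHomogeneous_homogeneousComponent γ _) (fun a ha => ?_) ?_
  · rw [coeff_homogeneousComponent, hγ0 a ha, ite_self]
  · have hL : (fun j => homogeneousComponent 1 (Xf j)) = diagVF lam + linearVF A :=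
      funext (homogeneousComponent_one_eq_diagVF_add_linearVF hlin)
    have hγ : (k + 1 : ℕ∞) ≤ γ.order := by rw [← hd, hk, Nat.cast_succ]
    rw [hk, ← hL, ← homogeneousComponent_vfApply hconst hγ, h, map_zero]

end VectorFields

/-- If `X` is in Poincaré–Dulac normal form with semisimple linear part `S_λ`, then for
any formal power series `β`, `S_λ(X(β)) = 0` implies `S_λ(β) = 0`. -/
theorem semisimple_kernel_of_composition {n : ℕ} (lam : Fin n → ℂ)
    (Xf : Fin n → MvPowerSeries (Fin n) ℂ) (hPD : IsPDNormalForm lam Xf) :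
    ∀ β : MvPowerSeries (Fin n) ℂ,
      vfApply (diagVF lam) (vfApply Xf β) = 0 → vfApply (diagVF lam) β = 0 := by
  obtain ⟨hconst, ⟨A, hA, hcomm, hlin⟩, hLie⟩ := hPD
  intro β hβ
  refine eq_zero_of_vfApply_eq_zero hconst hlin hA hcomm (fun a ha => ?_) ?_
  · rw [coeff_vfApply_diagVF, ha, zero_mul]
  · rw [← (isResonant_of_vfLie_eq_zero hLie).vfApply_diagVF_comm, hβ]
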